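/- arXiv:math/0206290 — 2 statements merged into one kernel-verified Lean document; each statement's English description precedes it below -/
import Mathlib

section
/- Let Φ be an irreducible reduced root system with base Δ and let β be an element of the root lattice with β = λ − wλ for some dominant weight λ and Weyl group element w. If β ≠ 0 and β = Σ_{α∈Δ} n_α α, then the set S = {α ∈ Δ : n_α ≠ 0} has the property that for any simple root γ ∉ S adjacent in the Dynkin diagram to some γ' ∈ S, the coefficient of the fundamental weight ω_γ in β is negative. (Equivalently: the support of λ − wλ in the simple roots cannot have a boundary simple root on which β has nonnegative fundamental-weight coefficient.) -/
open scoped RealInnerProductSpace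

noncomputable section

variable {E : Type*} [NormedAddCommGroup E] [InnerProductSpace ℝ E]

/-- The pairing `⟨x, α∨⟩ = 2(x,α)/(α,α)`. -/
def cpair (x α : E) : ℝ := 2 * ⟪x, α⟫ / ⟪α, α⟫

/-- Reflection in the hyperplane orthogonal to `α`. -/
def wrefl (α x : E) : E := x - cpair x α • α

/-- An irreducible reduced root system with a chosen base `simple : Fin ℓ → E`. -/
structure RootSystemData (ℓ : ℕ) (E : Type*) [NormedAddCommGroup E]
    [InnerProductSpace ℝ E] where
  roots : Finset E
  simple : Fin ℓ → E
  simple_mem : ∀ i, simple i ∈ roots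
  root_ne_zero : ∀ α ∈ roots, α ≠ 0
  reduced : ∀ α ∈ roots, (2 : ℝ) • α ∉ roots
  cpair_int : ∀ α ∈ roots, ∀ β ∈ roots, ∃ n : ℤ, cpair β α = (n : ℝ)
  reflect_mem : ∀ α ∈ roots, ∀ β ∈ roots, wrefl α β ∈ roots
  simple_indep : LinearIndependent ℝ simple
  root_decomp : ∀ α ∈ roots,
    (∃ c : Fin ℓ → ℕ, α = ∑ i, (c i : ℝ) • simple i) ∨
    (∃ c : Fin ℓ → ℕ, α = -∑ i, (c i : ℝ) • simple i)
  irred : ∀ S : Finset (Fin ℓ), S.Nonempty →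
    (∀ i ∈ S, ∀ j ∉ S, ⟪simple i, simple j⟫ = 0) → S = Finset.univ

namespace RootSystemData

variable {ℓ : ℕ} (R : RootSystemData ℓ E)

/-- Integral weights. -/
def IsIntegral (x : E) : Prop := ∀ α ∈ R.roots, ∃ n : ℤ, cpair x α = (n : ℝ)

/-- Dominant (integral) weights. -/
def IsDominant (x : E) : Prop :=
  R.IsIntegral x ∧ ∀ i, 0 ≤ cpair x (R.simple i)

/-- The dominant order: `R.wle μ λ` means `μ ≤ λ`, i.e. `λ - μ` is a nonnegative
integer combination of the simple roots. -/
def wle (μ lam : E) : Prop :=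
  ∃ c : Fin ℓ → ℕ, lam - μ = ∑ i, (c i : ℝ) • R.simple i

/-- Minuscule weights: nonzero dominant weights all of whose pairings with roots
lie in `{0, 1, -1}`. -/
def IsMinuscule (x : E) : Prop :=
  R.IsDominant x ∧ x ≠ 0 ∧
  ∀ α ∈ R.roots, cpair x α = 0 ∨ cpair x α = 1 ∨ cpair x α = -1

/-- `y` lies in the Weyl group orbit of `x`. -/
def InWeylOrbit (x y : E) : Prop :=
  ∃ l : List E, (∀ α ∈ l, α ∈ R.roots) ∧ y = l.foldr wrefl x

/-- `R.IsDualOf μ λ` expresses `μ = -w₀ λ`: `μ` is the dominant element of the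
Weyl orbit of `-λ`. -/
def IsDualOf (μ lam : E) : Prop := R.IsDominant μ ∧ R.InWeylOrbit (-lam) μ

/-- Low triples of dominant weights. -/
def LowTriple (lam mu nu : E) : Prop :=
  R.IsDominant lam ∧ R.IsDominant mu ∧ R.IsDominant nu ∧
  (∀ lam' mu' : E, R.IsDominant lam' → R.IsDominant mu' →
    R.wle lam' lam → R.wle mu' mu → R.wle nu (lam' + mu') → lam' = lam ∧ mu' = mu) ∧
  R.wle (nu + ∑ i, R.simple i) (lam + mu)

/-- Covering relation in the poset of dominant weights. -/
def Covers (lam mu : E) : Prop :=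
  R.IsDominant lam ∧ R.IsDominant mu ∧ R.wle mu lam ∧ mu ≠ lam ∧
  ∀ η, R.IsDominant η → R.wle mu η → R.wle η lam → η = mu ∨ η = lam

/-- A root of the subsystem `Φ_I` generated by the simple roots indexed by `I`. -/
def IsRootOf (I : Finset (Fin ℓ)) (β : E) : Prop :=
  β ∈ R.roots ∧ ∃ c : Fin ℓ → ℤ, (∀ i, c i ≠ 0 → i ∈ I) ∧
    β = ∑ i, (c i : ℝ) • R.simple i

/-- A short root of `Φ_I`. -/
def IsShortRootOf (I : Finset (Fin ℓ)) (β : E) : Prop :=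
  R.IsRootOf I β ∧ ∀ γ, R.IsRootOf I γ → ⟪β, β⟫ ≤ ⟪γ, γ⟫

/-- `θ` is the highest short root of `Φ_I`. -/
def IsHighestShortRoot (I : Finset (Fin ℓ)) (θ : E) : Prop :=
  R.IsShortRootOf I θ ∧ ∀ γ, R.IsShortRootOf I γ → R.wle γ θ

/-- `I` indexes a connected (i.e. irreducible) subdiagram of the Dynkin diagram. -/
def Connected (I : Finset (Fin ℓ)) : Prop :=
  I.Nonempty ∧ ∀ S ⊆ I, S.Nonempty →
    (∀ i ∈ S, ∀ j ∈ I, j ∉ S → ⟪R.simple i, R.simple j⟫ = 0) → S = I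

/-- `I` is of type A: the Cartan matrix of `Φ_I` is that of a type `A` chain. -/
def IsTypeASub (I : Finset (Fin ℓ)) : Prop :=
  ∃ e : Fin I.card ≃ {i // i ∈ I}, ∀ a b : Fin I.card,
    cpair (R.simple (e b).1) (R.simple (e a).1) =
      if a = b then 2
      else if (a : ℕ) + 1 = (b : ℕ) ∨ (b : ℕ) + 1 = (a : ℕ) then -1 else 0

/-- The subdiagram indexed by `I` is simply laced. -/
def SimplyLaced (I : Finset (Fin ℓ)) : Prop :=
  ∀ i ∈ I, ∀ j ∈ I, i ≠ j →
    cpair (R.simple i) (R.simple j) = 0 ∨ cpair (R.simple i) (R.simple j) = -1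

end RootSystemData

/-!
Write `β = λ - wλ = ∑ nᵢ αᵢ`. Since `λ` is dominant all `nᵢ` are nonnegative, and distinct
simple roots have nonpositive inner product (otherwise integrality of the Cartan integers and
strict Cauchy–Schwarz make `αᵢ - αⱼ` a root). Hence `⟪β, α_γ⟫ = ∑_{i ≠ γ} nᵢ ⟪αᵢ, α_γ⟫` is a sum
of nonpositive terms, and the term of `γ'` is negative.

Nonnegativity of the `nᵢ` is proved by induction on the length of a word `w = s_j w'` in simple
reflections: if `w'⁻¹ αⱼ` is a positive root then `⟪w'λ, αⱼ⟫ = ⟪λ, w'⁻¹ αⱼ⟫ ≥ 0` and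
`λ - wλ = (λ - w'λ) + ⟨w'λ, αⱼ∨⟩ αⱼ`; otherwise the exchange property shortens the word.
Reflections in arbitrary roots are words in simple reflections, since every positive root is
conjugate to a simple one (descend along the height).
-/

section Reflection

lemma cpair_eq_mul_inner (x α : E) : cpair x α = 2 / ⟪α, α⟫ * ⟪x, α⟫ := by
  rw [cpair, div_mul_eq_mul_div, mul_comm]

lemma cpair_nonneg_iff {α : E} (hα : α ≠ 0) (x : E) : 0 ≤ cpair x α ↔ 0 ≤ ⟪x, α⟫ := by
  rw [cpair_eq_mul_inner]
  exact mul_nonneg_iff_of_pos_left (div_pos two_pos (real_inner_self_pos.mpr hα))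

lemma cpair_pos_iff {α : E} (hα : α ≠ 0) (x : E) : 0 < cpair x α ↔ 0 < ⟪x, α⟫ := by
  rw [cpair_eq_mul_inner]
  exact mul_pos_iff_of_pos_left (div_pos two_pos (real_inner_self_pos.mpr hα))

lemma one_le_of_cpair_eq_intCast {x α : E} (hα : α ≠ 0) (hx : 0 < ⟪x, α⟫) {m : ℤ}
    (hm : cpair x α = m) : 1 ≤ m := by
  have : (0 : ℝ) < m := hm ▸ (cpair_pos_iff hα x).mpr hx
  exact_mod_cast this

lemma cpair_neg_iff {α : E} (hα : α ≠ 0) (x : E) : cpair x α < 0 ↔ ⟪x, α⟫ < 0 := by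
  simpa only [not_le] using (cpair_nonneg_iff hα x).not

lemma cpair_self {α : E} (hα : α ≠ 0) : cpair α α = 2 := by
  rw [cpair, mul_div_assoc, div_self (real_inner_self_pos.mpr hα).ne', mul_one]

lemma wrefl_self {α : E} (hα : α ≠ 0) : wrefl α α = -α := by
  rw [wrefl, cpair_self hα, two_smul]; abel

lemma wrefl_neg_left (α x : E) : wrefl (-α) x = wrefl α x := by
  simp only [wrefl, cpair, inner_neg_left, inner_neg_right, neg_neg, mul_neg, neg_div,
    smul_neg, neg_smul]

lemma wrefl_wrefl (α x : E) : wrefl α (wrefl α x) = x := by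
  rcases eq_or_ne α 0 with rfl | hα
  · simp [wrefl]
  have h : ⟪α, α⟫ ≠ 0 := (real_inner_self_pos.mpr hα).ne'
  simp only [wrefl, cpair, inner_sub_left, real_inner_smul_left]
  rw [sub_sub, ← add_smul, sub_eq_self, smul_eq_zero]
  left
  field_simp
  ring

lemma inner_wrefl_wrefl (α x y : E) : ⟪wrefl α x, wrefl α y⟫ = ⟪x, y⟫ := by
  rcases eq_or_ne α 0 with rfl | hα
  · simp [wrefl]
  have h : ⟪α, α⟫ ≠ 0 := (real_inner_self_pos.mpr hα).ne'
  simp only [wrefl, cpair, inner_sub_left, inner_sub_right, real_inner_smul_left,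
    real_inner_smul_right, real_inner_comm α x, real_inner_comm α y]
  field_simp
  ring

lemma cpair_wrefl_wrefl (α x y : E) : cpair (wrefl α x) (wrefl α y) = cpair x y := by
  simp only [cpair, inner_wrefl_wrefl]

lemma wrefl_sub_smul (α x y : E) (t : ℝ) :
    wrefl α (x - t • y) = wrefl α x - t • wrefl α y := by
  simp only [wrefl, cpair, inner_sub_left, real_inner_smul_left]
  module

lemma wrefl_conj (γ β x : E) :
    wrefl γ (wrefl β x) = wrefl (wrefl γ β) (wrefl γ x) := by
  change wrefl γ (x - cpair x β • β) = _
  rw [wrefl_sub_smul, ← cpair_wrefl_wrefl γ x β]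
  rfl

end Reflection

namespace RootSystemData

variable {ℓ : ℕ} (R : RootSystemData ℓ E)

lemma simple_ne_zero (i : Fin ℓ) : R.simple i ≠ 0 :=
  R.root_ne_zero _ (R.simple_mem i)

lemma inner_simple_self_pos (i : Fin ℓ) : 0 < ⟪R.simple i, R.simple i⟫ :=
  real_inner_self_pos.mpr (R.simple_ne_zero i)

lemma sum_smul_simple_injective :
    Function.Injective fun c : Fin ℓ → ℝ => ∑ i, c i • R.simple i := fun _ _ h =>
  R.simple_indep.fintypeLinearCombination_injective <| by
    simpa only [Fintype.linearCombination_apply] using h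

lemma sum_smul_simple_sub_smul (c : Fin ℓ → ℝ) (j : Fin ℓ) (t : ℝ) :
    ∑ i, c i • R.simple i - t • R.simple j =
      ∑ i, (c i - if i = j then t else 0) • R.simple i := by
  simp only [sub_smul, Finset.sum_sub_distrib, ite_smul, zero_smul, Finset.sum_ite_eq',
    Finset.mem_univ, if_true]

lemma wrefl_simple_sum (c : Fin ℓ → ℝ) (j : Fin ℓ) :
    wrefl (R.simple j) (∑ i, c i • R.simple i) =
      ∑ i, (c i - if i = j then cpair (∑ i, c i • R.simple i) (R.simple j) else 0) •
        R.simple i :=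
  R.sum_smul_simple_sub_smul c j _

def IsPosRoot (β : E) : Prop :=
  β ∈ R.roots ∧ ∃ c : Fin ℓ → ℕ, β = ∑ i, (c i : ℝ) • R.simple i

def IsNegRoot (β : E) : Prop :=
  β ∈ R.roots ∧ ∃ c : Fin ℓ → ℕ, β = -∑ i, (c i : ℝ) • R.simple i

variable {R}

lemma isPosRoot_or_isNegRoot {β : E} (hβ : β ∈ R.roots) : R.IsPosRoot β ∨ R.IsNegRoot β :=
  (R.root_decomp β hβ).imp (⟨hβ, ·⟩) (⟨hβ, ·⟩)

lemma IsPosRoot.not_isNegRoot {β : E} (hp : R.IsPosRoot β) : ¬R.IsNegRoot β := by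
  rintro ⟨-, d, hd⟩
  obtain ⟨hβ, c, hc⟩ := hp
  have hcd : (fun i => (c i : ℝ) + d i) = 0 := R.sum_smul_simple_injective <| by
    simp only [add_smul, Finset.sum_add_distrib, Pi.zero_apply, zero_smul, Finset.sum_const_zero]
    rw [← hc, eq_neg_iff_add_eq_zero.mp hd]
  refine R.root_ne_zero β hβ (hc.trans (Finset.sum_eq_zero fun i _ => ?_))
  have h := congrFun hcd i
  simp only [Pi.zero_apply] at h
  rw [show (c i : ℝ) = 0 by linarith [(c i).cast_nonneg (α := ℝ), (d i).cast_nonneg (α := ℝ)],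
    zero_smul]

variable (R)

lemma isPosRoot_simple (j : Fin ℓ) : R.IsPosRoot (R.simple j) := by
  refine ⟨R.simple_mem j, fun i => if i = j then 1 else 0, ?_⟩
  simp [ite_smul]

lemma neg_mem_roots {β : E} (hβ : β ∈ R.roots) : -β ∈ R.roots := by
  simpa only [wrefl_self (R.root_ne_zero β hβ)] using R.reflect_mem β hβ β hβ

variable {R}

lemma IsNegRoot.neg {β : E} (h : R.IsNegRoot β) : R.IsPosRoot (-β) := by
  obtain ⟨hβ, c, hc⟩ := h
  exact ⟨R.neg_mem_roots hβ, c, by rw [hc, neg_neg]⟩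

variable (R)

lemma eq_one_of_natCast_smul_simple_mem_roots {t : ℕ} {j : Fin ℓ}
    (ht : (t : ℝ) • R.simple j ∈ R.roots) : t = 1 := by
  have hj := R.simple_ne_zero j
  have ht0 : t ≠ 0 := by
    rintro rfl
    exact R.root_ne_zero _ ht (by simp)
  have ht2 : t ≠ 2 := by
    rintro rfl
    exact R.reduced _ (R.simple_mem j) (by exact_mod_cast ht)
  by_contra ht1
  have ht3 : (3 : ℝ) ≤ t := by exact_mod_cast (by omega : 3 ≤ t)
  obtain ⟨m, hm⟩ := R.cpair_int _ ht _ (R.simple_mem j)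
  -- `⟨α, (tα)∨⟩ = 2 / t` lies strictly between `0` and `1`
  have hmt : (m : ℝ) = 2 / t := by
    rw [← hm, cpair, real_inner_smul_right, real_inner_smul_left, real_inner_smul_right]
    field_simp [(real_inner_self_pos.mpr hj).ne']
  have hm0 : (0 : ℝ) < m := hmt ▸ by positivity
  have hm1 : (m : ℝ) < 1 := hmt ▸ (div_lt_one (by linarith)).mpr (by linarith)
  have : (0 : ℤ) < m := by exact_mod_cast hm0
  have : m < (1 : ℤ) := by exact_mod_cast hm1
  omega

lemma exists_coeff_ne_zero_of_ne_simple {β : E} {c : Fin ℓ → ℕ} {j : Fin ℓ}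
    (hβ : β ∈ R.roots) (hc : β = ∑ i, (c i : ℝ) • R.simple i) (hne : β ≠ R.simple j) :
    ∃ k ≠ j, c k ≠ 0 := by
  by_contra! h
  have hβj : β = (c j : ℝ) • R.simple j := by
    rw [hc, Finset.sum_eq_single j (fun k _ hk => by rw [h k hk, Nat.cast_zero, zero_smul])
      (fun hj => absurd (Finset.mem_univ j) hj)]
  have h1 := R.eq_one_of_natCast_smul_simple_mem_roots (hβj ▸ hβ)
  exact hne (by rw [hβj, h1, Nat.cast_one, one_smul])

lemma isPosRoot_wrefl_simple {β : E} {j : Fin ℓ} (hβ : R.IsPosRoot β) (hne : β ≠ R.simple j) :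
    R.IsPosRoot (wrefl (R.simple j) β) := by
  obtain ⟨hβr, c, hc⟩ := hβ
  obtain ⟨k, hkj, hck⟩ := R.exists_coeff_ne_zero_of_ne_simple hβr hc hne
  refine (isPosRoot_or_isNegRoot (R.reflect_mem _ (R.simple_mem j) _ hβr)).resolve_right ?_
  rintro ⟨-, d, hd⟩
  -- `s_j` changes only the `j`-th coefficient, so the `k`-th one stays positive
  rw [hc, R.wrefl_simple_sum, ← Finset.sum_neg_distrib] at hd
  have hk := congrFun (R.sum_smul_simple_injective
    (show _ = ∑ i, (-(d i : ℝ)) • R.simple i by simpa only [neg_smul] using hd)) k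
  simp only [if_neg hkj, sub_zero] at hk
  have : (c k : ℝ) = 0 := by linarith [(c k).cast_nonneg (α := ℝ), (d k).cast_nonneg (α := ℝ)]
  exact hck (by exact_mod_cast this)

lemma eq_simple_of_isNegRoot_wrefl {β : E} {j : Fin ℓ} (hβ : R.IsPosRoot β)
    (hneg : R.IsNegRoot (wrefl (R.simple j) β)) : β = R.simple j := by
  by_contra hne
  exact (R.isPosRoot_wrefl_simple hβ hne).not_isNegRoot hneg

lemma smul_simple_sub_smul_simple (i j : Fin ℓ) (a b : ℝ) :
    a • R.simple i - b • R.simple j =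
      ∑ k, (Pi.single i a - Pi.single j b : Fin ℓ → ℝ) k • R.simple k := by
  simp only [Pi.sub_apply, sub_smul, Finset.sum_sub_distrib, Pi.single_apply, ite_smul,
    zero_smul, Finset.sum_ite_eq', Finset.mem_univ, if_true]

lemma sub_simple_not_mem_roots {i j : Fin ℓ} (hij : i ≠ j) :
    R.simple i - R.simple j ∉ R.roots := by
  intro h
  have hform := R.smul_simple_sub_smul_simple i j 1 1
  simp only [one_smul] at hform
  rcases isPosRoot_or_isNegRoot h with ⟨-, c, hc⟩ | ⟨-, c, hc⟩
  · have hj := congrFun (R.sum_smul_simple_injective (hform.symm.trans hc)) j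
    simp only [Pi.sub_apply, Pi.single_eq_same, Pi.single_eq_of_ne' hij] at hj
    linarith [(c j).cast_nonneg (α := ℝ)]
  · have hi := congrFun (R.sum_smul_simple_injective (hform.symm.trans
      (hc.trans (show _ = ∑ k, (-(c k : ℝ)) • R.simple k by
        simp only [neg_smul, Finset.sum_neg_distrib])))) i
    simp only [Pi.sub_apply, Pi.single_eq_same, Pi.single_eq_of_ne hij] at hi
    linarith [(c i).cast_nonneg (α := ℝ)]

lemma inner_simple_lt_norm_mul_norm {i j : Fin ℓ} (hij : i ≠ j) :
    ⟪R.simple i, R.simple j⟫ < ‖R.simple i‖ * ‖R.simple j‖ := by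
  refine inner_lt_norm_mul_iff_real.mpr fun h => R.simple_ne_zero j ?_
  have hi := congrFun (R.sum_smul_simple_injective
    ((R.smul_simple_sub_smul_simple i j _ _).symm.trans ((sub_eq_zero.mpr h).trans
      (show (0 : E) = ∑ k, (0 : Fin ℓ → ℝ) k • R.simple k by simp)))) i
  simpa only [Pi.sub_apply, Pi.single_eq_same, Pi.single_eq_of_ne hij, sub_zero,
    Pi.zero_apply, norm_eq_zero] using hi

lemma inner_simple_nonpos {i j : Fin ℓ} (hij : i ≠ j) : ⟪R.simple i, R.simple j⟫ ≤ 0 := by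
  by_contra! hpos
  have hi := R.inner_simple_self_pos i
  have hj := R.inner_simple_self_pos j
  obtain ⟨m, hm⟩ := R.cpair_int _ (R.simple_mem j) _ (R.simple_mem i)
  obtain ⟨n, hn⟩ := R.cpair_int _ (R.simple_mem i) _ (R.simple_mem j)
  have hm1 := one_le_of_cpair_eq_intCast (R.simple_ne_zero j) hpos hm
  have hn1 := one_le_of_cpair_eq_intCast (R.simple_ne_zero i) (by rwa [real_inner_comm]) hn
  have hmn : m * n < 4 := by
    have hCS := R.inner_simple_lt_norm_mul_norm hij
    have hsq : ⟪R.simple i, R.simple j⟫ * ⟪R.simple i, R.simple j⟫ <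
        ⟪R.simple i, R.simple i⟫ * ⟪R.simple j, R.simple j⟫ := by
      rw [real_inner_self_eq_norm_mul_norm, real_inner_self_eq_norm_mul_norm]
      nlinarith
    have : (m * n : ℝ) < 4 := by
      rw [← hm, ← hn, cpair, cpair, real_inner_comm (R.simple i) (R.simple j), div_mul_div_comm,
        div_lt_iff₀ (mul_pos hj hi)]
      nlinarith
    exact_mod_cast this
  obtain rfl | rfl : m = 1 ∨ n = 1 := by
    by_contra! h
    nlinarith [(by omega : 2 ≤ m), (by omega : 2 ≤ n)]
  · refine R.sub_simple_not_mem_roots hij ?_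
    simpa only [wrefl, hm, Int.cast_one, one_smul] using
      R.reflect_mem _ (R.simple_mem j) _ (R.simple_mem i)
  · refine R.sub_simple_not_mem_roots hij.symm ?_
    simpa only [wrefl, hn, Int.cast_one, one_smul] using
      R.reflect_mem _ (R.simple_mem i) _ (R.simple_mem j)

/-- The action of the word `s_{j₁} ⋯ s_{jₖ}` in the simple reflections, `L = [j₁, …, jₖ]`. -/
def wordAct (L : List (Fin ℓ)) (x : E) : E :=
  L.foldr (fun j y => wrefl (R.simple j) y) x

@[simp] lemma wordAct_nil (x : E) : R.wordAct [] x = x := rfl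

@[simp] lemma wordAct_cons (j : Fin ℓ) (L : List (Fin ℓ)) (x : E) :
    R.wordAct (j :: L) x = wrefl (R.simple j) (R.wordAct L x) := rfl

lemma wordAct_append (L M : List (Fin ℓ)) (x : E) :
    R.wordAct (L ++ M) x = R.wordAct L (R.wordAct M x) :=
  List.foldr_append ..

lemma inner_wordAct_wordAct (L : List (Fin ℓ)) (x y : E) :
    ⟪R.wordAct L x, R.wordAct L y⟫ = ⟪x, y⟫ := by
  induction L with
  | nil => rfl
  | cons j L ih => rw [wordAct_cons, wordAct_cons, inner_wrefl_wrefl, ih]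

lemma wordAct_reverse_wordAct (L : List (Fin ℓ)) (x : E) :
    R.wordAct L.reverse (R.wordAct L x) = x := by
  induction L generalizing x with
  | nil => rfl
  | cons j L ih =>
    rw [List.reverse_cons, wordAct_append, wordAct_cons, wordAct_cons, wordAct_nil,
      wrefl_wrefl, ih]

lemma wordAct_wordAct_reverse (L : List (Fin ℓ)) (x : E) :
    R.wordAct L (R.wordAct L.reverse x) = x := by
  simpa only [List.reverse_reverse] using R.wordAct_reverse_wordAct L.reverse x

lemma wordAct_mem_roots (L : List (Fin ℓ)) {β : E} (hβ : β ∈ R.roots) :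
    R.wordAct L β ∈ R.roots := by
  induction L with
  | nil => exact hβ
  | cons j L ih => exact R.reflect_mem _ (R.simple_mem j) _ ih

lemma wordAct_wrefl (L : List (Fin ℓ)) (β x : E) :
    R.wordAct L (wrefl β x) = wrefl (R.wordAct L β) (R.wordAct L x) := by
  induction L with
  | nil => rfl
  | cons j L ih => rw [wordAct_cons, ih, wrefl_conj, wordAct_cons, wordAct_cons]

/-- The exchange property. -/
lemma exists_wordAct_wrefl_eq_of_isNegRoot {β : E} (hβ : R.IsPosRoot β) :
    ∀ L : List (Fin ℓ), R.IsNegRoot (R.wordAct L β) →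
      ∃ L' : List (Fin ℓ), L'.length + 1 = L.length ∧
        ∀ x, R.wordAct L (wrefl β x) = R.wordAct L' x
  | [], hneg => absurd hneg hβ.not_isNegRoot
  | j :: L, hneg => by
    rcases isPosRoot_or_isNegRoot (R.wordAct_mem_roots L hβ.1) with hpos | hneg'
    · have hj := R.eq_simple_of_isNegRoot_wrefl hpos hneg
      exact ⟨L, rfl, fun x => by rw [wordAct_cons, wordAct_wrefl, hj, wrefl_wrefl]⟩
    · obtain ⟨L', hlen, hL'⟩ := exists_wordAct_wrefl_eq_of_isNegRoot hβ L hneg'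
      exact ⟨j :: L', by simp [hlen], fun x => by rw [wordAct_cons, hL', wordAct_cons]⟩

lemma exists_simple_inner_pos {β : E} (hβ : β ≠ 0) {c : Fin ℓ → ℕ}
    (hc : β = ∑ i, (c i : ℝ) • R.simple i) : ∃ j, 0 < ⟪R.simple j, β⟫ := by
  have hsum : ∑ _i : Fin ℓ, (0 : ℝ) < ∑ i, (c i : ℝ) * ⟪R.simple i, β⟫ :=
    calc ∑ _i : Fin ℓ, (0 : ℝ) = 0 := Finset.sum_const_zero
      _ < ⟪β, β⟫ := real_inner_self_pos.mpr hβ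
      _ = ∑ i, (c i : ℝ) * ⟪R.simple i, β⟫ := by
        nth_rw 1 [hc]
        simp only [sum_inner, real_inner_smul_left]
  obtain ⟨j, -, hj⟩ := Finset.exists_lt_of_sum_lt hsum
  exact ⟨j, pos_of_mul_pos_right hj (c j).cast_nonneg⟩

lemma exists_wordAct_simple_eq {β : E} (hβ : R.IsPosRoot β) :
    ∃ (L : List (Fin ℓ)) (j : Fin ℓ), R.wordAct L (R.simple j) = β := by
  obtain ⟨hβr, c, hc⟩ := hβ
  induction hn : ∑ i, c i using Nat.strong_induction_on generalizing β c with
  | _ n ih =>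
  by_cases hsimple : ∃ j, β = R.simple j
  · obtain ⟨j, rfl⟩ := hsimple
    exact ⟨[], j, rfl⟩
  push Not at hsimple
  obtain ⟨j, hj⟩ := R.exists_simple_inner_pos (R.root_ne_zero β hβr) hc
  obtain ⟨m, hm⟩ := R.cpair_int _ (R.simple_mem j) _ hβr
  have hm1 : (1 : ℝ) ≤ m := by
    exact_mod_cast one_le_of_cpair_eq_intCast (R.simple_ne_zero j) (by rwa [real_inner_comm]) hm
  obtain ⟨hβ'r, d, hd⟩ := R.isPosRoot_wrefl_simple ⟨hβr, c, hc⟩ (hsimple j)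
  -- `s_j β = β - m αⱼ` has height `∑ cᵢ - m`
  have hcoeff : ∀ i, (d i : ℝ) = c i - if i = j then (m : ℝ) else 0 := by
    refine congrFun (R.sum_smul_simple_injective (?_ : ∑ i, (d i : ℝ) • R.simple i =
      ∑ i, ((c i : ℝ) - if i = j then (m : ℝ) else 0) • R.simple i))
    rw [← hd, ← R.sum_smul_simple_sub_smul, ← hc, ← hm]
    rfl
  have hlt : ∑ i, d i < n := by
    rw [← hn]
    have : (∑ i, d i : ℝ) < ∑ i, (c i : ℝ) := by
      simp only [hcoeff, Finset.sum_sub_distrib, Finset.sum_ite_eq', Finset.mem_univ, if_true]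
      linarith
    exact_mod_cast this
  obtain ⟨L, k, hL⟩ := ih _ hlt hβ'r d hd rfl
  exact ⟨j :: L, k, by rw [wordAct_cons, hL, wrefl_wrefl]⟩

lemma exists_wordAct_eq_wrefl {β : E} (hβ : β ∈ R.roots) :
    ∃ L : List (Fin ℓ), ∀ x, wrefl β x = R.wordAct L x := by
  wlog hpos : R.IsPosRoot β generalizing β
  · obtain ⟨L, hL⟩ := this (R.neg_mem_roots hβ)
      ((isPosRoot_or_isNegRoot hβ).resolve_left hpos).neg
    exact ⟨L, fun x => by rw [← hL, wrefl_neg_left]⟩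
  obtain ⟨L, j, rfl⟩ := R.exists_wordAct_simple_eq hpos
  refine ⟨L ++ j :: L.reverse, fun x => ?_⟩
  rw [wordAct_append, wordAct_cons, wordAct_wrefl, wordAct_wordAct_reverse]

lemma InWeylOrbit.exists_wordAct_eq {x y : E} (h : R.InWeylOrbit x y) :
    ∃ L : List (Fin ℓ), y = R.wordAct L x := by
  obtain ⟨l, hl, rfl⟩ := h
  induction l with
  | nil => exact ⟨[], rfl⟩
  | cons β l ih =>
    obtain ⟨L, hL⟩ := ih fun α hα => hl α (List.mem_cons_of_mem β hα)
    obtain ⟨M, hM⟩ := R.exists_wordAct_eq_wrefl (hl β List.mem_cons_self)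
    exact ⟨M ++ L, by rw [List.foldr_cons, hL, hM, wordAct_append]⟩

lemma coeff_nonneg_of_mem_hull {x : E} (hx : x ∈ PointedCone.hull ℝ (Set.range R.simple))
    {c : Fin ℓ → ℝ} (hc : x = ∑ i, c i • R.simple i) (i : Fin ℓ) : 0 ≤ c i := by
  obtain ⟨d, hd⟩ := (Submodule.mem_span_range_iff_exists_fun _).mp hx
  have hdc : (fun i => (d i : ℝ)) = c := R.sum_smul_simple_injective (hd.trans hc)
  exact hdc ▸ (d i).2

lemma inner_nonneg_of_isPosRoot {lam β : E} (hlam : ∀ i, 0 ≤ cpair lam (R.simple i))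
    (hβ : R.IsPosRoot β) : 0 ≤ ⟪lam, β⟫ := by
  obtain ⟨-, c, rfl⟩ := hβ
  rw [inner_sum]
  refine Finset.sum_nonneg fun i _ => ?_
  rw [real_inner_smul_right]
  exact mul_nonneg (c i).cast_nonneg ((cpair_nonneg_iff (R.simple_ne_zero i) _).mp (hlam i))

lemma sub_wordAct_mem_hull {lam : E} (hlam : ∀ i, 0 ≤ cpair lam (R.simple i))
    (L : List (Fin ℓ)) : lam - R.wordAct L lam ∈ PointedCone.hull ℝ (Set.range R.simple) := by
  induction hk : L.length using Nat.strong_induction_on generalizing L with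
  | _ k ih =>
  match L with
  | [] => simp
  | j :: L =>
    rcases isPosRoot_or_isNegRoot (R.wordAct_mem_roots L.reverse (R.simple_mem j))
      with hpos | hneg
    · have hcp : 0 ≤ cpair (R.wordAct L lam) (R.simple j) := by
        rw [cpair_nonneg_iff (R.simple_ne_zero j), ← R.wordAct_wordAct_reverse L (R.simple j),
          inner_wordAct_wordAct]
        exact R.inner_nonneg_of_isPosRoot hlam hpos
      rw [wordAct_cons, wrefl, sub_sub_eq_add_sub, add_sub_right_comm]
      exact add_mem (ih _ (by simp [← hk]) L rfl)
        (PointedCone.smul_mem _ hcp (PointedCone.subset_hull ⟨j, rfl⟩))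
    · -- `s_j w = (w⁻¹ s_j)⁻¹` is a shorter word, by the exchange property
      obtain ⟨N, hlen, hN⟩ :=
        R.exists_wordAct_wrefl_eq_of_isNegRoot (R.isPosRoot_simple j) L.reverse hneg
      have hjL : R.wordAct (j :: L) lam = R.wordAct N.reverse lam := by
        conv_rhs => rw [← R.wordAct_reverse_wordAct L lam,
          ← wrefl_wrefl (R.simple j) (R.wordAct L lam), hN, wordAct_reverse_wordAct]
        rfl
      rw [hjL]
      refine ih _ ?_ N.reverse rfl
      simp only [List.length_reverse, List.length_cons] at hlen hk ⊢
      omega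

end RootSystemData

variable {ℓ : ℕ}

theorem statement2_general (R : RootSystemData ℓ E) (lam y : E)
    (hlam : R.IsDominant lam) (hw : R.InWeylOrbit lam y)
    (n : Fin ℓ → ℤ) (hb : lam - y = ∑ i, (n i : ℝ) • R.simple i)
    (γ γ' : Fin ℓ) (hγ : n γ = 0) (hγ' : n γ' ≠ 0)
    (hadj : ⟪R.simple γ, R.simple γ'⟫ ≠ 0) :
    cpair (lam - y) (R.simple γ) < 0 := by
  obtain ⟨L, rfl⟩ := hw.exists_wordAct_eq
  have hn := R.coeff_nonneg_of_mem_hull (R.sub_wordAct_mem_hull hlam.2 L) hb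
  have hγγ' : γ' ≠ γ := fun h => hγ' (h ▸ hγ)
  rw [cpair_neg_iff (R.simple_ne_zero γ), hb, sum_inner]
  refine (Finset.sum_lt_sum (g := 0) (fun i _ => ?_) ⟨γ', Finset.mem_univ _, ?_⟩).trans_eq
    (Finset.sum_const_zero)
  · rw [real_inner_smul_left]
    rcases eq_or_ne i γ with rfl | hi
    · simp [hγ]
    · exact mul_nonpos_of_nonneg_of_nonpos (hn i) (R.inner_simple_nonpos hi)
  · rw [real_inner_smul_left]
    exact mul_neg_of_pos_of_neg ((hn γ').lt_of_ne (by exact_mod_cast hγ'.symm))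
      ((R.inner_simple_nonpos hγγ').lt_of_ne (by rwa [real_inner_comm]))

/-- If `β = λ - wλ ≠ 0` with `λ` dominant and `w` in the Weyl group, and
`γ` is a simple root outside the support of `β` adjacent to a simple root `γ'`
in the support, then the `ω_γ`-coefficient of `β` (that is, `⟨β, γ∨⟩`) is
negative. -/
theorem statement2 (R : RootSystemData ℓ E) (lam y : E)
    (hlam : R.IsDominant lam) (hw : R.InWeylOrbit lam y)
    (n : Fin ℓ → ℤ) (hb : lam - y = ∑ i, (n i : ℝ) • R.simple i)
    (hne : lam - y ≠ 0)
    (γ γ' : Fin ℓ) (hγ : n γ = 0) (hγ' : n γ' ≠ 0)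
    (hadj : ⟪R.simple γ, R.simple γ'⟫ ≠ 0) :
    cpair (lam - y) (R.simple γ) < 0 :=
  statement2_general R lam y hlam hw n hb γ γ' hγ hγ' hadj
end
end

section
/- In the root system of type G₂ there are no low triples. More precisely, if λ, μ, ν are dominant weights with ν + α₁ + α₂ ≤ λ + μ and the minimality condition holds, applying the reductions λ ↦ λ − (α₁+α₂) and λ ↦ λ − α₁ forces λ = μ = ω₁; but then ν ∈ {0, ω₁} and ν ≤ 0 + μ, contradicting minimality since 0 ≤ λ. -/
open scoped RealInnerProductSpace

noncomputable section

variable {E : Type*} [NormedAddCommGroup E] [InnerProductSpace ℝ E]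

variable {ℓ : ℕ}

lemma cpair_sub_left (x y α : E) : cpair (x - y) α = cpair x α - cpair y α := by
  simp only [cpair, inner_sub_left]; ring

lemma cpair_add_left (x y α : E) : cpair (x + y) α = cpair x α + cpair y α := by
  simp only [cpair, inner_add_left]; ring

lemma cpair_smul_left (c : ℝ) (x α : E) : cpair (c • x) α = c * cpair x α := by
  simp only [cpair, real_inner_smul_left]; ring

/-- In the root system of type G₂ (Cartan matrix with entries
`⟨α₂,α₁∨⟩ = -3`, `⟨α₁,α₂∨⟩ = -1`) there are no low triples. -/
theorem statement11 (R : RootSystemData 2 E)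
    (hG : cpair (R.simple 1) (R.simple 0) = -3 ∧
          cpair (R.simple 0) (R.simple 1) = -1 ∧
          cpair (R.simple 0) (R.simple 0) = 2 ∧
          cpair (R.simple 1) (R.simple 1) = 2) :
    ∀ lam mu nu : E, ¬ R.LowTriple lam mu nu := by
  intro lam mu nu hLT
  set s0 := R.simple 0 with hs0def
  set s1 := R.simple 1 with hs1def
  obtain ⟨h10, h01, h00, h11⟩ := hG
  obtain ⟨hlam, hmu, hnu, hmin, c, hc⟩ := hLT
  -- the master identity
  have hid : lam + mu - nu = ((c 0 : ℝ) + 1) • s0 + ((c 1 : ℝ) + 1) • s1 := by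
    simp only [Fin.sum_univ_two] at hc
    linear_combination (norm := module) hc
  -- building dominance of shifted weights
  have domAux : ∀ x : E, R.IsDominant x → ∀ e0 e1 : ℕ,
      0 ≤ cpair x s0 - ((e0 : ℝ) * 2 + (e1 : ℝ) * (-3)) →
      0 ≤ cpair x s1 - ((e0 : ℝ) * (-1) + (e1 : ℝ) * 2) →
      R.IsDominant (x - ((e0 : ℝ) • s0 + (e1 : ℝ) • s1)) := by
    intro x hx e0 e1 hx0 hx1
    constructor
    · intro α hα
      obtain ⟨n, hn⟩ := hx.1 α hα
      obtain ⟨m0, hm0⟩ := R.cpair_int α hα s0 (R.simple_mem 0)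
      obtain ⟨m1, hm1⟩ := R.cpair_int α hα s1 (R.simple_mem 1)
      refine ⟨n - e0 * m0 - e1 * m1, ?_⟩
      rw [cpair_sub_left, cpair_add_left, cpair_smul_left, cpair_smul_left, hn, hm0, hm1]
      push_cast; ring
    · intro i
      fin_cases i
      · show 0 ≤ cpair (x - ((e0 : ℝ) • s0 + (e1 : ℝ) • s1)) s0
        rw [cpair_sub_left, cpair_add_left, cpair_smul_left, cpair_smul_left, h00, h10]
        linarith
      · show 0 ≤ cpair (x - ((e0 : ℝ) • s0 + (e1 : ℝ) • s1)) s1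
        rw [cpair_sub_left, cpair_add_left, cpair_smul_left, cpair_smul_left, h01, h11]
        linarith
  -- applying the minimality hypothesis: nontrivial dominant reductions are impossible
  have keyzero : ∀ e0 e1 : ℕ, (e0 : ℝ) • s0 + (e1 : ℝ) • s1 = 0 → (e0 : ℝ) = 0 := by
    intro e0 e1 hE
    have hf := congrArg (fun x => cpair x s0) hE
    have hg := congrArg (fun x => cpair x s1) hE
    simp only [cpair_add_left, cpair_smul_left, h00, h10, h01, h11] at hf hg
    have hz0 : cpair (0 : E) s0 = 0 := by simp [cpair]
    have hz1 : cpair (0 : E) s1 = 0 := by simp [cpair]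
    rw [hz0] at hf; rw [hz1] at hg
    linarith
  have keyL : ∀ e0 e1 : ℕ, e0 ≤ c 0 + 1 → e1 ≤ c 1 + 1 →
      R.IsDominant (lam - ((e0 : ℝ) • s0 + (e1 : ℝ) • s1)) → (e0 : ℝ) = 0 := by
    intro e0 e1 he0 he1 hdom
    have hw1 : R.wle (lam - ((e0 : ℝ) • s0 + (e1 : ℝ) • s1)) lam := by
      refine ⟨![e0, e1], ?_⟩
      simp only [Fin.sum_univ_two, Matrix.cons_val_zero, Matrix.cons_val_one, Matrix.head_cons]
      module
    have hw2 : R.wle mu mu := ⟨0, by simp⟩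
    have hw3 : R.wle nu ((lam - ((e0 : ℝ) • s0 + (e1 : ℝ) • s1)) + mu) := by
      refine ⟨![c 0 + 1 - e0, c 1 + 1 - e1], ?_⟩
      simp only [Fin.sum_univ_two, Matrix.cons_val_zero, Matrix.cons_val_one, Matrix.head_cons]
      rw [Nat.cast_sub he0, Nat.cast_sub he1]
      push_cast
      linear_combination (norm := module) hid
    have h1 := (hmin _ mu hdom hmu hw1 hw2 hw3).1
    have hE : (e0 : ℝ) • s0 + (e1 : ℝ) • s1 = 0 := sub_eq_self.mp h1
    exact keyzero _ _ hE
  have keyR : ∀ e0 e1 : ℕ, e0 ≤ c 0 + 1 → e1 ≤ c 1 + 1 →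
      R.IsDominant (mu - ((e0 : ℝ) • s0 + (e1 : ℝ) • s1)) → (e0 : ℝ) = 0 := by
    intro e0 e1 he0 he1 hdom
    have hw1 : R.wle (mu - ((e0 : ℝ) • s0 + (e1 : ℝ) • s1)) mu := by
      refine ⟨![e0, e1], ?_⟩
      simp only [Fin.sum_univ_two, Matrix.cons_val_zero, Matrix.cons_val_one, Matrix.head_cons]
      module
    have hw2 : R.wle lam lam := ⟨0, by simp⟩
    have hw3 : R.wle nu (lam + (mu - ((e0 : ℝ) • s0 + (e1 : ℝ) • s1))) := by
      refine ⟨![c 0 + 1 - e0, c 1 + 1 - e1], ?_⟩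
      simp only [Fin.sum_univ_two, Matrix.cons_val_zero, Matrix.cons_val_one, Matrix.head_cons]
      rw [Nat.cast_sub he0, Nat.cast_sub he1]
      push_cast
      linear_combination (norm := module) hid
    have h1 := (hmin lam _ hlam hdom hw2 hw1 hw3).2
    have hE : (e0 : ℝ) • s0 + (e1 : ℝ) • s1 = 0 := sub_eq_self.mp h1
    exact keyzero _ _ hE
  -- nonnegativity of pairings with dominant weights
  have hfl : 0 ≤ cpair lam s0 := hlam.2 0
  have hgl : 0 ≤ cpair lam s1 := hlam.2 1
  have hfm : 0 ≤ cpair mu s0 := hmu.2 0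
  have hgm : 0 ≤ cpair mu s1 := hmu.2 1
  have hfn : 0 ≤ cpair nu s0 := hnu.2 0
  have hgn : 0 ≤ cpair nu s1 := hnu.2 1
  -- integrality: a positive value is at least 1
  have ge_one : ∀ x : E, R.IsIntegral x → ∀ i : Fin 2, 0 ≤ cpair x (R.simple i) →
      cpair x (R.simple i) ≠ 0 → 1 ≤ cpair x (R.simple i) := by
    intro x hx i h0 hne
    obtain ⟨n, hn⟩ := hx _ (R.simple_mem i)
    rw [hn] at h0 hne ⊢
    have hn0 : (0 : ℤ) ≤ n := by exact_mod_cast h0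
    have hnne : n ≠ 0 := fun h => hne (by rw [h]; norm_num)
    have : (1 : ℤ) ≤ n := by omega
    exact_mod_cast this
  -- Step 1: ⟨lam, α₂∨⟩ = 0 and ⟨mu, α₂∨⟩ = 0
  have hglz : cpair lam s1 = 0 := by
    by_contra hne
    have h1 : (1 : ℝ) ≤ cpair lam s1 := ge_one lam hlam.1 1 hgl hne
    have hdom := domAux lam hlam 1 1 (by push_cast; linarith) (by push_cast; linarith)
    have := keyL 1 1 (by omega) (by omega) hdom
    norm_num at this
  have hgmz : cpair mu s1 = 0 := by
    by_contra hne
    have h1 : (1 : ℝ) ≤ cpair mu s1 := ge_one mu hmu.1 1 hgm hne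
    have hdom := domAux mu hmu 1 1 (by push_cast; linarith) (by push_cast; linarith)
    have := keyR 1 1 (by omega) (by omega) hdom
    norm_num at this
  -- pairing the master identity with α₂
  have hidg : cpair lam s1 + cpair mu s1 - cpair nu s1 =
      ((c 0 : ℝ) + 1) * (-1) + ((c 1 : ℝ) + 1) * 2 := by
    have := congrArg (fun x => cpair x s1) hid
    simpa only [cpair_sub_left, cpair_add_left, cpair_smul_left, h01, h11] using this
  -- hence c 0 + 1 ≥ 2 (c 1 + 1), so in particular c 0 ≥ 1
  have hd : 2 * ((c 1 : ℝ) + 1) ≤ (c 0 : ℝ) + 1 := by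
    rw [hglz, hgmz] at hidg; linarith
  have hc0 : 1 ≤ c 0 := by
    have : (1 : ℝ) ≤ (c 0 : ℝ) := by
      have : (0 : ℝ) ≤ (c 1 : ℝ) := Nat.cast_nonneg _
      linarith
    exact_mod_cast this
  -- Step 2: ⟨lam, α₁∨⟩ = 0 and ⟨mu, α₁∨⟩ = 0
  have hflz : cpair lam s0 = 0 := by
    by_contra hne
    have h1 : (1 : ℝ) ≤ cpair lam s0 := ge_one lam hlam.1 0 hfl hne
    have hdom := domAux lam hlam 2 1 (by push_cast; linarith) (by push_cast; rw [hglz]; norm_num)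
    have := keyL 2 1 (by omega) (by omega) hdom
    norm_num at this
  have hfmz : cpair mu s0 = 0 := by
    by_contra hne
    have h1 : (1 : ℝ) ≤ cpair mu s0 := ge_one mu hmu.1 0 hfm hne
    have hdom := domAux mu hmu 2 1 (by push_cast; linarith) (by push_cast; rw [hgmz]; norm_num)
    have := keyR 2 1 (by omega) (by omega) hdom
    norm_num at this
  -- pairing the master identity with α₁ gives the final contradiction
  have hidf : cpair lam s0 + cpair mu s0 - cpair nu s0 =
      ((c 0 : ℝ) + 1) * 2 + ((c 1 : ℝ) + 1) * (-3) := by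
    have := congrArg (fun x => cpair x s0) hid
    simpa only [cpair_sub_left, cpair_add_left, cpair_smul_left, h00, h10] using this
  rw [hflz, hfmz] at hidf
  linarith
end
end
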